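/- arXiv:2001.05582 — 3 statements merged into one kernel-verified Lean document; each statement's English description precedes it below -/
import Mathlib

section
/- Let x be a word (list) over an alphabet Σ and let i ≤ j be indices with j < |x|. Then the word obtained from x by deleting the symbol at position i equals the word obtained from x by deleting the symbol at position j if and only if all the symbols of x at positions i, i+1, …, j are equal (i.e., positions i through j lie in a single run of x). In particular, deleting any symbol of a run yields the same word, so two deletions occurring in copies of the same run of a transmitted word produce identical channel outputs and the deleted position cannot be recovered. -/
/-!
Both `x.eraseIdx i` and `x.eraseIdx j` agree with `x` before position `i` and with `x`
shifted by one after position `j`; at a position `k` with `i ≤ k < j` the first reads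
`x[k + 1]` and the second `x[k]`. So the two words coincide iff consecutive symbols in
positions `i, …, j` agree, i.e. iff all of them equal `x[i]`.
-/

namespace List

variable {α : Type*} {l : List α} {i j : ℕ}

theorem eraseIdx_eq_eraseIdx_iff_getElem_succ_eq (hij : i ≤ j) (hj : j < l.length) :
    l.eraseIdx i = l.eraseIdx j ↔ ∀ k (_ : i ≤ k) (hkj : k < j), l[k + 1] = l[k] := by
  have hlen : (l.eraseIdx i).length = (l.eraseIdx j).length := by
    rw [length_eraseIdx_of_lt (hij.trans_lt hj), length_eraseIdx_of_lt hj]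
  constructor
  · intro h k hik hkj
    have hk : k < (l.eraseIdx i).length := by
      rw [length_eraseIdx_of_lt (hij.trans_lt hj)]; omega
    calc l[k + 1] = (l.eraseIdx i)[k] := (getElem_eraseIdx_of_ge hk hik).symm
      _ = (l.eraseIdx j)[k] := by simp only [h]
      _ = l[k] := getElem_eraseIdx_of_lt _ hkj
  · intro h
    refine ext_getElem hlen fun k hki hkj => ?_
    simp only [getElem_eraseIdx]
    split_ifs <;> first | rfl | omega | exact h k (by omega) (by omega)

theorem forall_getElem_succ_eq_iff_forall_getElem_eq (hij : i ≤ j) (hj : j < l.length) :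
    (∀ k (_ : i ≤ k) (hkj : k < j), l[k + 1] = l[k]) ↔
      ∀ k (_ : i ≤ k) (hkj : k ≤ j), l[k] = l[i] := by
  constructor
  · intro h k hik
    induction k, hik using Nat.le_induction with
    | base => exact fun _ => rfl
    | succ k hik ih => exact fun hkj => (h k hik hkj).trans (ih (by omega))
  · intro h k hik hkj
    rw [h k hik (by omega), h (k + 1) (by omega) hkj]

end List

/-- For a word `x` and indices `i ≤ j < |x|`, deleting position
`i` from `x` yields the same word as deleting position `j` from `x` iff all the
symbols of `x` at positions `i, i+1, …, j` are equal (i.e. positions `i` through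
`j` lie in a single run of `x`). -/
theorem eraseIdx_eq_eraseIdx_iff_run {α : Type*} (x : List α) (i j : ℕ)
    (hij : i ≤ j) (hj : j < x.length) :
    x.eraseIdx i = x.eraseIdx j ↔
      ∀ k (hik : i ≤ k) (hkj : k ≤ j),
        x[k]'(lt_of_le_of_lt hkj hj) = x[i]'(lt_of_le_of_lt hij hj) := by
  rw [List.eraseIdx_eq_eraseIdx_iff_getElem_succ_eq hij hj,
    List.forall_getElem_succ_eq_iff_forall_getElem_eq hij hj]
end

section
/- Let Σ be an alphabet, let a, b ∈ Σ, let m ≥ 1, and let alt(a,b,m) denote the word of length m whose k-th symbol (for 0 ≤ k ≤ m−1) is a if k is even and b if k is odd. Then for all words u and v over Σ, deleting position |u| from the word u ++ alt(a,b,m) ++ v yields the same word as deleting position |u| + m − 1 from the word u ++ alt(b,a,m) ++ v. Consequently, when two single-deletion channel outputs arise from deletions at the two ends of an alternating segment, the same pair of outputs arises from the word with the alternating segment replaced by its swapped version, so the two transmitted words are indistinguishable. -/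
/-- `altWord a b m` is the length-`m` word whose `k`-th symbol (0-indexed) is
`a` when `k` is even and `b` when `k` is odd. -/
def altWord {α : Type*} (a b : α) (m : ℕ) : List α :=
  (List.range m).map fun k => if k % 2 = 0 then a else b

lemma altWord_length {α : Type*} (a b : α) (m : ℕ) : (altWord a b m).length = m := by
  simp [altWord]

lemma altWord_cons {α : Type*} (a b : α) (m : ℕ) :
    altWord a b (m + 1) = a :: altWord b a m := by
  simp only [altWord, List.range_succ_eq_map, List.map_cons, List.map_map, if_true]
  congr 1
  apply List.map_congr_left
  intro k _
  simp only [Function.comp_apply, Nat.succ_eq_add_one]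
  rcases Nat.even_or_odd k with h | h
  · simp [Nat.even_iff.mp h, Nat.succ_mod_two_eq_one_iff.mpr (Nat.even_iff.mp h)]
  · simp [Nat.odd_iff.mp h, Nat.succ_mod_two_eq_zero_iff.mpr (Nat.odd_iff.mp h)]

lemma altWord_snoc {α : Type*} (a b : α) (m : ℕ) :
    altWord a b (m + 1) = altWord a b m ++ [if m % 2 = 0 then a else b] := by
  simp [altWord, List.range_succ]

/-- For `m ≥ 1` and any words `u, v`, deleting position `|u|`
(the first symbol of the alternating segment) from `u ++ alt(a,b,m) ++ v`
yields the same word as deleting position `|u| + m − 1` (the last symbol of the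
alternating segment) from `u ++ alt(b,a,m) ++ v`; hence the two transmitted
words are indistinguishable from the pair of single-deletion outputs. -/
theorem eraseIdx_altWord_indistinguishable {α : Type*} (a b : α) (m : ℕ)
    (hm : 1 ≤ m) (u v : List α) :
    (u ++ altWord a b m ++ v).eraseIdx u.length =
      (u ++ altWord b a m ++ v).eraseIdx (u.length + m - 1) := by
  obtain ⟨m', rfl⟩ := Nat.exists_eq_add_of_le hm
  rw [add_comm 1 m']
  have L : (u ++ altWord a b (m' + 1) ++ v).eraseIdx u.length
      = u ++ (altWord b a m' ++ v) := by
    rw [altWord_cons, List.append_assoc,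
        List.eraseIdx_append_of_length_le (le_refl _), Nat.sub_self]
    rfl
  have R : (u ++ altWord b a (m' + 1) ++ v).eraseIdx (u.length + (m' + 1) - 1)
      = u ++ (altWord b a m' ++ v) := by
    have hk : u.length + (m' + 1) - 1 = u.length + m' := by omega
    rw [hk, altWord_snoc, List.append_assoc,
        List.eraseIdx_append_of_length_le (Nat.le_add_right _ _),
        Nat.add_sub_cancel_left, List.append_assoc,
        List.eraseIdx_append_of_length_le (le_of_eq (altWord_length b a m')),
        altWord_length, Nat.sub_self]
    rfl
  rw [L, R]
end

section
/- The Varshamov–Tenengolts code corrects a single deletion: let n ≥ 1 and let x, y ∈ {0,1}^n be binary words such that Σ_{i=1}^n i·x_i ≡ Σ_{i=1}^n i·y_i (mod n+1). If there exist indices i and j such that the word obtained from x by deleting its i-th bit equals the word obtained from y by deleting its j-th bit, then x = y. -/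
namespace VTaux

def bit (b : Bool) : ℕ := if b then 1 else 0

def ones : List Bool → ℕ
  | [] => 0
  | a :: l => bit a + ones l

def wsum : List Bool → ℕ
  | [] => 0
  | a :: l => bit a + ones l + wsum l

lemma bit_le_one (b : Bool) : bit b ≤ 1 := by cases b <;> simp [bit]

lemma ones_append (s t : List Bool) : ones (s ++ t) = ones s + ones t := by
  induction s with
  | nil => simp [ones]
  | cons a s ih => simp [ones, ih]; ring

lemma ones_le_length (l : List Bool) : ones l ≤ l.length := by
  induction l with
  | nil => simp [ones]
  | cons a l ih => have := bit_le_one a; simp only [ones, List.length_cons]; omega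

lemma ones_eq_zero {l : List Bool} (h : ones l = 0) :
    l = List.replicate l.length false := by
  induction l with
  | nil => simp
  | cons a l ih =>
    simp only [ones] at h
    have hb : bit a = 0 := by omega
    have ha : a = false := by cases a <;> simp [bit] at hb ⊢
    subst ha
    simp only [List.length_cons, List.replicate_succ]
    exact congrArg _ (ih (by omega))

lemma ones_eq_length {l : List Bool} (h : ones l = l.length) :
    l = List.replicate l.length true := by
  induction l with
  | nil => simp
  | cons a l ih =>
    simp only [ones, List.length_cons] at h
    have h1 := bit_le_one a
    have h2 := ones_le_length l
    have hb : bit a = 1 := by omega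
    have ha : a = true := by cases a <;> simp [bit] at hb ⊢
    subst ha
    simp only [List.length_cons, List.replicate_succ]
    exact congrArg _ (ih (by omega))

lemma sum_bit (l : List Bool) :
    (∑ i ∈ Finset.range l.length, (if l[i]! then (1:ℕ) else 0)) = ones l := by
  induction l with
  | nil => simp [ones]
  | cons a l ih =>
    rw [List.length_cons, Finset.sum_range_succ']
    simp only [List.getElem!_cons_succ, List.getElem!_cons_zero]
    rw [ih]
    cases a <;> simp [ones, bit] <;> omega

lemma sum_wsum (l : List Bool) :
    (∑ i ∈ Finset.range l.length, (i + 1) * (if l[i]! then (1:ℕ) else 0)) = wsum l := by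
  induction l with
  | nil => simp [wsum]
  | cons a l ih =>
    rw [List.length_cons, Finset.sum_range_succ']
    simp only [List.getElem!_cons_succ, List.getElem!_cons_zero]
    have : ∀ i : ℕ, (i + 1 + 1) * (if l[i]! then (1:ℕ) else 0)
        = (i + 1) * (if l[i]! then (1:ℕ) else 0) + (if l[i]! then (1:ℕ) else 0) := by
      intro i; ring
    rw [Finset.sum_congr rfl (fun i _ => this i), Finset.sum_add_distrib, ih, sum_bit]
    cases a <;> simp [wsum, ones, bit] <;> omega

@[simp] lemma ones_cons (a : Bool) (l : List Bool) : ones (a :: l) = bit a + ones l := rfl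

@[simp] lemma wsum_cons (a : Bool) (l : List Bool) : wsum (a :: l) = bit a + ones l + wsum l := rfl

lemma wsum_middle (b : Bool) (d : List Bool) :
    ∀ t : List Bool, wsum (t ++ b :: d) = wsum (t ++ d) + (t.length + 1) * bit b + ones d := by
  intro t
  induction t with
  | nil => simp [wsum, ones]; ring
  | cons a t ih =>
    simp only [List.cons_append, wsum_cons, ones_cons, ones_append, ih, List.length_cons]
    ring

lemma cons_replicate_append (b : Bool) (m : ℕ) (d : List Bool) :
    b :: (List.replicate m b ++ d) = List.replicate m b ++ b :: d := by
  rw [← List.cons_append, ← List.replicate_succ, List.replicate_succ',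
    List.append_assoc, List.singleton_append]

lemma key (z : List Bool) (b c : Bool) (i j : ℕ) (hij : i ≤ j) (hj : j ≤ z.length)
    (h : (i + 1) * bit b + ones (z.drop i) = (j + 1) * bit c + ones (z.drop j)) :
    z.take i ++ b :: z.drop i = z.take j ++ c :: z.drop j := by
  set u := (z.drop i).take (j - i) with hu
  have hul : u.length = j - i := by
    simp only [hu, List.length_take, List.length_drop]
    omega
  have hui : z.drop i = u ++ z.drop j := by
    conv_lhs => rw [← List.take_append_drop (j - i) (z.drop i)]
    rw [List.drop_drop]
    congr 2
    omega
  have h1 : ones (z.drop i) = ones u + ones (z.drop j) := by rw [hui, ones_append]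
  have h2 : ones u ≤ j - i := hul ▸ ones_le_length u
  have htj : z.take j = z.take i ++ u := by
    have hj' : i + (j - i) = j := by omega
    rw [← hj', List.take_add]
  cases b <;> cases c <;> simp [bit] at h
  · -- false / false
    have h0 : ones u = 0 := by omega
    have hrep : u = List.replicate u.length false := ones_eq_zero h0
    rw [hui, htj, List.append_assoc]
    congr 1
    conv_lhs => rw [hrep]
    conv_rhs => rw [hrep]
    exact cons_replicate_append false u.length (z.drop j)
  · omega
  · omega
  · -- true / true
    have h0 : ones u = u.length := by omega
    have hrep : u = List.replicate u.length true := ones_eq_length h0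
    rw [hui, htj, List.append_assoc]
    congr 1
    conv_lhs => rw [hrep]
    conv_rhs => rw [hrep]
    exact cons_replicate_append true u.length (z.drop j)

lemma decomp {x : List Bool} {i : ℕ} (hi : i < x.length) :
    x = (x.eraseIdx i).take i ++ x[i] :: (x.eraseIdx i).drop i := by
  have hl : (x.take i).length = i := by
    rw [List.length_take]; omega
  have e1 : x.eraseIdx i = x.take i ++ x.drop (i + 1) := List.eraseIdx_eq_take_drop_succ x i
  have tz : (x.eraseIdx i).take i = x.take i := by rw [e1, List.take_left' hl]
  have dz : (x.eraseIdx i).drop i = x.drop (i + 1) := by rw [e1, List.drop_left' hl]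
  rw [tz, dz, ← List.drop_eq_getElem_cons hi, List.take_append_drop]

end VTaux

open VTaux in
/-- The Varshamov–Tenengolts code corrects a single deletion:
if `x, y ∈ {0,1}^n` (`n ≥ 1`) have equal VT checksums `Σ_{i=1}^n i·x_i` modulo
`n+1`, and deleting some bit of `x` yields the same word as deleting some bit
of `y`, then `x = y`. -/
theorem vt_code_corrects_single_deletion (n : ℕ) (hn : 1 ≤ n) (x y : List Bool)
    (hx : x.length = n) (hy : y.length = n)
    (hsum : (∑ i ∈ Finset.range n, (i + 1) * (if x[i]! then 1 else 0)) % (n + 1) =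
            (∑ i ∈ Finset.range n, (i + 1) * (if y[i]! then 1 else 0)) % (n + 1))
    (i j : ℕ) (hdel : x.eraseIdx i = y.eraseIdx j) :
    x = y := by
  by_cases hi : i < x.length
  · by_cases hj : j < y.length
    · -- main case
      set z := x.eraseIdx i with hz
      have hzy : z = y.eraseIdx j := hdel
      have hzl : z.length = n - 1 := by
        rw [hz, List.length_eraseIdx_of_lt hi, hx]
      have hxdec : x = z.take i ++ x[i] :: z.drop i := decomp hi
      have hydec : y = z.take j ++ y[j] :: z.drop j := by rw [hzy]; exact decomp hj
      -- rewrite the sums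
      have hsx : (∑ k ∈ Finset.range n, (k + 1) * (if x[k]! then (1:ℕ) else 0)) = wsum x := by
        rw [← hx]; exact sum_wsum x
      have hsy : (∑ k ∈ Finset.range n, (k + 1) * (if y[k]! then (1:ℕ) else 0)) = wsum y := by
        rw [← hy]; exact sum_wsum y
      have hil : (z.take i).length = i := by rw [List.length_take]; omega
      have hjl : (z.take j).length = j := by rw [List.length_take]; omega
      have hwx : wsum x = wsum z + ((i + 1) * bit x[i] + ones (z.drop i)) := by
        conv_lhs => rw [hxdec]
        rw [wsum_middle, hil, List.take_append_drop]
        ring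
      have hwy : wsum y = wsum z + ((j + 1) * bit y[j] + ones (z.drop j)) := by
        conv_lhs => rw [hydec]
        rw [wsum_middle, hjl, List.take_append_drop]
        ring
      set Dx := (i + 1) * bit x[i] + ones (z.drop i) with hDx
      set Dy := (j + 1) * bit y[j] + ones (z.drop j) with hDy
      have hbx : Dx ≤ n := by
        have h1 : (i + 1) * bit x[i] ≤ (i + 1) * 1 :=
          Nat.mul_le_mul_left _ (bit_le_one _)
        have h2 : ones (z.drop i) ≤ z.length - i := by
          have := ones_le_length (z.drop i)
          rwa [List.length_drop] at this
        rw [hx] at hi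
        omega
      have hby : Dy ≤ n := by
        have h1 : (j + 1) * bit y[j] ≤ (j + 1) * 1 :=
          Nat.mul_le_mul_left _ (bit_le_one _)
        have h2 : ones (z.drop j) ≤ z.length - j := by
          have := ones_le_length (z.drop j)
          rwa [List.length_drop] at this
        rw [hy] at hj
        omega
      have hmod : (wsum z + Dx) % (n + 1) = (wsum z + Dy) % (n + 1) := by
        rw [← hwx, ← hwy, ← hsx, ← hsy]; exact hsum
      have hDeq : Dx = Dy := by
        have hcong : Dx ≡ Dy [MOD n + 1] := Nat.ModEq.add_left_cancel' (wsum z) hmod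
        have hq : Dx % (n + 1) = Dy % (n + 1) := hcong
        rwa [Nat.mod_eq_of_lt (by omega), Nat.mod_eq_of_lt (by omega)] at hq
      rcases le_total i j with hij | hij
      · have := key z x[i] y[j] i j hij (by rw [hzl]; omega)
          (by rw [hDx, hDy] at hDeq; exact hDeq)
        rw [hxdec, hydec, this]
      · have := key z y[j] x[i] j i hij (by rw [hzl]; omega)
          (by rw [hDx, hDy] at hDeq; exact hDeq.symm)
        rw [hxdec, hydec, this]
    · -- j out of range with i in range: length contradiction
      push_neg at hj
      rw [List.eraseIdx_of_length_le hj] at hdel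
      have hlen := congrArg List.length hdel
      rw [List.length_eraseIdx_of_lt hi, hx, hy] at hlen
      omega
  · -- i out of range: x.eraseIdx i = x
    push_neg at hi
    rw [List.eraseIdx_of_length_le hi] at hdel
    have : j ≥ y.length := by
      by_contra hjy
      push_neg at hjy
      have := congrArg List.length hdel
      rw [hx, List.length_eraseIdx_of_lt hjy, hy] at this
      omega
    rw [List.eraseIdx_of_length_le this] at hdel
    exact hdel
end
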